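/- If G is a reduced nilpotent group (i.e., G has no nontrivial divisible subgroup), then the quotient G/Z(G) is also reduced. -/

import Mathlib

/-- A subgroup `D` of a group is *divisible* if every element of `D` has an
`n`-th root in `D` for every positive integer `n`. -/
def Subgroup.IsDivisible {G : Type*} [Group G] (D : Subgroup G) : Prop :=
  ∀ d ∈ D, ∀ n : ℕ, 0 < n → ∃ x ∈ D, x ^ n = d

/-- A group is *reduced* if its only divisible subgroup is trivial. -/
def Group.IsReduced (G : Type*) [Group G] : Prop :=
  ∀ D : Subgroup G, D.IsDivisible → D = ⊥

/-!
If `B ≤ Z(G/Z(G))` is divisible and nontrivial, the commutators `⁅k, g⁆` with `k` lying over `B`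
are central, depend only on the class of `k`, and satisfy `⁅x ^ n, g⁆ = ⁅x, g⁆ ^ n`; so an `n`-th
root of `k` modulo `Z(G)` gives an `n`-th root of `⁅k, g⁆`, and they generate a nontrivial
divisible subgroup of `G`. In a nilpotent group, induction on the nilpotency class (pass to
`G/Z(G)` and lift back by the previous step) shows that a nontrivial divisible subgroup yields a
nontrivial central one. Applied to the nilpotent group `G/Z(G)`, both steps together turn a
nontrivial divisible subgroup of `G/Z(G)` into one of `G`.
-/

open scoped commutatorElement
open Subgroup

section

variable {G : Type*} [Group G]

theorem Subgroup.IsDivisible.map {H : Type*} [Group H] {A : Subgroup G} (hA : A.IsDivisible)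
    (f : G →* H) : (A.map f).IsDivisible := by
  rintro _ ⟨a, ha, rfl⟩ n hn
  obtain ⟨x, hx, rfl⟩ := hA a ha n hn
  exact ⟨f x, mem_map_of_mem f hx, (map_pow f x n).symm⟩

theorem Subgroup.isDivisible_closure_of_commute {S : Set G}
    (hcomm : ∀ x ∈ S, ∀ y ∈ S, Commute x y)
    (hroot : ∀ s ∈ S, ∀ n : ℕ, 0 < n → ∃ x ∈ closure S, x ^ n = s) :
    (closure S).IsDivisible := by
  have := isMulCommutative_closure fun x hx y hy ↦ (hcomm x hx y hy).eq
  intro d hd n hn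
  induction hd using closure_induction with
  | mem s hs => exact hroot s hs n hn
  | one => exact ⟨1, one_mem _, one_pow n⟩
  | mul a b _ _ ha hb =>
    obtain ⟨u, hu, rfl⟩ := ha
    obtain ⟨v, hv, rfl⟩ := hb
    exact ⟨u * v, mul_mem hu hv, (show Commute u v from setLike_mul_comm hu hv).mul_pow n⟩
  | inv a _ ha =>
    obtain ⟨u, hu, rfl⟩ := ha
    exact ⟨u⁻¹, inv_mem hu, inv_pow u n⟩

theorem commutatorElement_pow_left {a g : G} (h : Commute a ⁅a, g⁆) (n : ℕ) :
    ⁅a ^ n, g⁆ = ⁅a, g⁆ ^ n := by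
  induction n with
  | zero => simp
  | succ n ih =>
    rw [pow_succ', commutatorElement_mul_left_eq_conj_mul, ih, (h.pow_right n).eq,
      mul_inv_cancel_right, pow_succ]

theorem commutatorElement_eq_of_mk_eq_mk {k k' : G} (h : (k : G ⧸ center G) = k') (g : G) :
    ⁅k, g⁆ = ⁅k', g⁆ := by
  obtain ⟨z, hz, rfl⟩ : ∃ z ∈ center G, k' = z * k :=
    ⟨k' * k⁻¹, by simpa [div_eq_mul_inv] using QuotientGroup.eq_iff_div_mem.mp h.symm, by group⟩
  rw [commutatorElement_mul_left_eq_conj_mul, (mem_center_iff.mp hz _).symm,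
    commutatorElement_eq_one_iff_commute.mpr (mem_center_iff.mp hz g).symm]
  group

theorem commutatorElement_mem_center_of_mk_mem_center {k : G}
    (hk : (k : G ⧸ center G) ∈ center (G ⧸ center G)) (g : G) : ⁅k, g⁆ ∈ center G := by
  rw [← QuotientGroup.eq_one_iff, ← QuotientGroup.mk'_apply, map_commutatorElement,
    commutatorElement_eq_one_iff_commute]
  exact (mem_center_iff.mp hk _).symm

variable {B : Subgroup (G ⧸ center G)}

theorem commutator_comap_mk_top_le_center (hB : B ≤ center (G ⧸ center G)) :
    ⁅B.comap (QuotientGroup.mk' (center G)), (⊤ : Subgroup G)⁆ ≤ center G :=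
  commutator_le.mpr fun _ hk g _ ↦ commutatorElement_mem_center_of_mk_mem_center (hB hk) g

theorem commutator_comap_mk_top_ne_bot (hB : B ≠ ⊥) :
    ⁅B.comap (QuotientGroup.mk' (center G)), (⊤ : Subgroup G)⁆ ≠ ⊥ := by
  rw [Ne, commutator_top_right_eq_bot_iff_le_center]
  intro hle
  apply hB
  rw [← map_comap_eq_self_of_surjective (QuotientGroup.mk'_surjective (center G)) B,
    Subgroup.map_eq_bot_iff, QuotientGroup.ker_mk']
  exact hle

theorem isDivisible_commutator_comap_mk_top (hd : B.IsDivisible)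
    (hB : B ≤ center (G ⧸ center G)) :
    (⁅B.comap (QuotientGroup.mk' (center G)), (⊤ : Subgroup G)⁆).IsDivisible := by
  have hcentral := commutator_comap_mk_top_le_center hB
  rw [Subgroup.commutator_def] at hcentral ⊢
  refine isDivisible_closure_of_commute
    (fun x hx y _ ↦ (mem_center_iff.mp (hcentral (subset_closure hx)) y).symm) ?_
  rintro _ ⟨k, hk, g, -, rfl⟩ n hn
  obtain ⟨_, hy, hyk⟩ := hd _ hk n hn
  obtain ⟨x, rfl⟩ := QuotientGroup.mk'_surjective (center G) ‹G ⧸ center G›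
  refine ⟨⁅x, g⁆, subset_closure ⟨x, hy, g, mem_top g, rfl⟩, ?_⟩
  have hx : Commute x ⁅x, g⁆ :=
    mem_center_iff.mp (commutatorElement_mem_center_of_mk_mem_center (hB hy) g) x
  rw [← commutatorElement_pow_left hx]
  exact commutatorElement_eq_of_mk_eq_mk (by simpa using hyk) g

theorem exists_isDivisible_ne_bot_le_center_of_quotient_center (hd : B.IsDivisible)
    (hB : B ≠ ⊥) (hBc : B ≤ center (G ⧸ center G)) :
    ∃ A : Subgroup G, A.IsDivisible ∧ A ≠ ⊥ ∧ A ≤ center G :=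
  ⟨_, isDivisible_commutator_comap_mk_top hd hBc, commutator_comap_mk_top_ne_bot hB,
    commutator_comap_mk_top_le_center hBc⟩

theorem Group.exists_isDivisible_ne_bot_le_center [Group.IsNilpotent G] {A : Subgroup G}
    (hd : A.IsDivisible) (hA : A ≠ ⊥) :
    ∃ B : Subgroup G, B.IsDivisible ∧ B ≠ ⊥ ∧ B ≤ center G := by
  refine (Group.nilpotent_center_quotient_ind (P := fun G _ _ ↦ ∀ {A : Subgroup G},
    A.IsDivisible → A ≠ ⊥ → ∃ B : Subgroup G, B.IsDivisible ∧ B ≠ ⊥ ∧ B ≤ center G)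
    G ?_ ?_) hd hA
  · intro G _ _ A _ hA
    exact absurd (Subgroup.eq_bot_of_subsingleton A) hA
  · intro G _ _ ih A hd hA
    by_cases hAc : A ≤ center G
    · exact ⟨A, hd, hA, hAc⟩
    have hmap : A.map (QuotientGroup.mk' (center G)) ≠ ⊥ := by
      rwa [Ne, Subgroup.map_eq_bot_iff, QuotientGroup.ker_mk']
    obtain ⟨B, hBd, hB, hBc⟩ := ih (hd.map _) hmap
    exact exists_isDivisible_ne_bot_le_center_of_quotient_center hBd hB hBc

end

theorem stmt1 {G : Type*} [Group G] [Group.IsNilpotent G]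
    (h : Group.IsReduced G) :
    Group.IsReduced (G ⧸ Subgroup.center G) := by
  intro D hD
  by_contra hD0
  obtain ⟨B, hBd, hB0, hBc⟩ := Group.exists_isDivisible_ne_bot_le_center hD hD0
  obtain ⟨A, hAd, hA0, -⟩ := exists_isDivisible_ne_bot_le_center_of_quotient_center hBd hB0 hBc
  exact hA0 (h A hAd)
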